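/- arXiv:1602.07955 — 2 statements merged into one kernel-verified Lean document; each statement's English description precedes it below -/
import Mathlib

section
/- Let A ∈ C^{I×R} and B ∈ C^{J×R}. If A and B both have full column rank R, then the Khatri-Rao product A ⊙ B ∈ C^{IJ×R} has full column rank R. -/
open Matrix

/-- If A and B both have full column rank, then their Khatri-Rao
(columnwise Kronecker) product has full column rank. -/
theorem khatriRao_full_column_rank (I J R : ℕ)
    (A : Matrix (Fin I) (Fin R) ℂ) (B : Matrix (Fin J) (Fin R) ℂ)
    (hA : LinearIndependent ℂ (fun r : Fin R => Aᵀ r))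
    (hB : LinearIndependent ℂ (fun r : Fin R => Bᵀ r)) :
    LinearIndependent ℂ
      (fun r : Fin R =>
        (Matrix.of fun (p : Fin I × Fin J) (r' : Fin R) =>
          A p.1 r' * B p.2 r')ᵀ r) := by
  rw [Fintype.linearIndependent_iff]
  intro g hg r
  -- key: for each i, g r * A i r = 0
  have key : ∀ (i : Fin I) (r : Fin R), g r * A i r = 0 := by
    intro i
    have := (Fintype.linearIndependent_iff.mp hB) (fun r => g r * A i r) ?_
    · exact this
    · funext j
      have h := congrFun hg (i, j)
      simpa [Finset.sum_apply, mul_assoc, transpose_apply, mul_comm, mul_left_comm]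
        using h
  by_contra hgr
  have hcol : Aᵀ r = 0 := by
    funext i
    have := key i r
    have : A i r = 0 := by
      rcases mul_eq_zero.mp this with h | h
      · exact absurd h hgr
      · exact h
    simpa [transpose_apply] using this
  exact (hA.ne_zero r) hcol
end

section
/- The k-rank of a Khatri-Rao product satisfies k_{A⊙B} ≥ min(k_A + k_B − 1, R) whenever A ∈ C^{I×R} and B ∈ C^{J×R} both have no zero columns. -/
open Matrix

/-- The k-rank (Kruskal rank) of a matrix: the largest k (at most the number of
columns) such that every set of k columns is linearly independent. -/
noncomputable def kRank {m n : Type*} [Fintype m] [Fintype n]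
    (A : Matrix m n ℂ) : ℕ :=
  sSup {k | k ≤ Fintype.card n ∧
    ∀ s : Finset n, s.card = k →
      LinearIndependent ℂ (fun i : {x // x ∈ s} => Aᵀ (i : n))}

namespace KRankAux

variable {m n : Type*} [Fintype m] [Fintype n]

/-- The defining set of `kRank`. -/
def kSet (A : Matrix m n ℂ) : Set ℕ :=
  {k | k ≤ Fintype.card n ∧
    ∀ s : Finset n, s.card = k →
      LinearIndependent ℂ (fun i : {x // x ∈ s} => Aᵀ (i : n))}

lemma zero_mem_kSet (A : Matrix m n ℂ) : 0 ∈ kSet A := by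
  refine ⟨Nat.zero_le _, fun s hs => ?_⟩
  rw [Finset.card_eq_zero] at hs
  subst hs
  haveI : IsEmpty {x // x ∈ (∅ : Finset n)} := by
    constructor; rintro ⟨x, hx⟩; simp at hx
  exact linearIndependent_empty_type

lemma bddAbove_kSet (A : Matrix m n ℂ) : BddAbove (kSet A) :=
  ⟨Fintype.card n, fun _ hk => hk.1⟩

lemma kRank_mem_kSet (A : Matrix m n ℂ) : kRank A ∈ kSet A :=
  Nat.sSup_mem ⟨0, zero_mem_kSet A⟩ (bddAbove_kSet A)

lemma le_kRank_of_mem {A : Matrix m n ℂ} {k : ℕ} (hk : k ∈ kSet A) :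
    k ≤ kRank A :=
  le_csSup (bddAbove_kSet A) hk

lemma mem_kSet_of_le {A : Matrix m n ℂ} {k j : ℕ} (hk : k ∈ kSet A) (hj : j ≤ k) :
    j ∈ kSet A := by
  refine ⟨hj.trans hk.1, fun s hs => ?_⟩
  obtain ⟨u, hsu, -, hu⟩ := Finset.exists_subsuperset_card_eq (n := k)
    (Finset.subset_univ s) (hs ▸ hj) (by simpa [Finset.card_univ] using hk.1)
  have hli := hk.2 u hu
  have : (fun i : {x // x ∈ s} => Aᵀ (i : n)) =
      (fun i : {x // x ∈ u} => Aᵀ (i : n)) ∘ (fun i : {x // x ∈ s} => ⟨i.1, hsu i.2⟩) := rfl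
  rw [this]
  exact hli.comp _ (fun a b hab => by
    have h2 : (a : n) = (b : n) := congrArg (fun x : {x // x ∈ u} => (x : n)) hab
    exact Subtype.ext h2)

/-- Every collection of at most `kRank A` columns is linearly independent. -/
lemma li_of_card_le {A : Matrix m n ℂ} {s : Finset n} (hs : s.card ≤ kRank A) :
    LinearIndependent ℂ (fun i : {x // x ∈ s} => Aᵀ (i : n)) :=
  (mem_kSet_of_le (kRank_mem_kSet A) hs).2 s rfl

lemma one_le_kRank {A : Matrix m n ℂ} (hn : 0 < Fintype.card n)
    (hA : ∀ r, Aᵀ r ≠ 0) : 1 ≤ kRank A := by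
  apply le_kRank_of_mem
  refine ⟨hn, fun s hs => ?_⟩
  obtain ⟨a, rfl⟩ := Finset.card_eq_one.mp hs
  rw [Fintype.linearIndependent_iff]
  intro g hg i
  by_contra hgi
  have hia : (i : n) = a := Finset.mem_singleton.mp i.2
  have hsum : ∑ j : {x // x ∈ ({a} : Finset n)}, g j • Aᵀ (j : n) = g i • Aᵀ (i : n) :=
    Finset.sum_eq_single_of_mem i (Finset.mem_univ i) (fun b _ hbne =>
      absurd (Subtype.ext ((Finset.mem_singleton.mp b.2).trans hia.symm)) hbne)
  rw [hsum] at hg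
  rcases smul_eq_zero.mp hg with h | h
  · exact hgi h
  · exact hA a (hia ▸ h)

/-- A matrix with linearly independent rows gives a surjective `mulVec`. -/
lemma mulVec_surjective_of_li_rows {M : Matrix m n ℂ}
    (h : LinearIndependent ℂ (fun i => M i)) : Function.Surjective M.mulVec := by
  have hr : M.rank = Fintype.card m := h.rank_matrix
  have htop : LinearMap.range M.mulVecLin = ⊤ := by
    apply Submodule.eq_top_of_finrank_eq
    rw [show Module.finrank ℂ ↥(LinearMap.range M.mulVecLin) = M.rank from rfl, hr,
      Module.finrank_fintype_fun_eq_card]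
  intro v
  obtain ⟨y, hy⟩ := LinearMap.range_eq_top.mp htop v
  exact ⟨y, hy⟩

end KRankAux

open KRankAux in
/-- k-rank bound for the Khatri-Rao product:
k_{A⊙B} ≥ min(k_A + k_B − 1, R) when A and B have no zero columns. -/
theorem kRank_khatriRao (I J R : ℕ)
    (A : Matrix (Fin I) (Fin R) ℂ) (B : Matrix (Fin J) (Fin R) ℂ)
    (hA : ∀ r, Aᵀ r ≠ 0) (hB : ∀ r, Bᵀ r ≠ 0) :
    min (kRank A + kRank B - 1) R ≤
      kRank (Matrix.of fun (p : Fin I × Fin J) (r : Fin R) =>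
        A p.1 r * B p.2 r) := by
  classical
  set C : Matrix (Fin I × Fin J) (Fin R) ℂ :=
    Matrix.of fun (p : Fin I × Fin J) (r : Fin R) => A p.1 r * B p.2 r with hC
  set K := min (kRank A + kRank B - 1) R with hK
  apply le_kRank_of_mem
  refine ⟨by rw [hK, Fintype.card_fin]; exact min_le_right _ _, fun s hs => ?_⟩
  rw [Fintype.linearIndependent_iff]
  intro g hg
  -- extend g to a coefficient function on all of Fin R
  set c : Fin R → ℂ := fun r => if h : r ∈ s then g ⟨r, h⟩ else 0 with hc
  have hsum : ∑ r ∈ s, c r • Cᵀ r = 0 := by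
    rw [← Finset.sum_attach s (fun r => c r • Cᵀ r)]
    have : ∀ i : {x // x ∈ s}, c i • Cᵀ (i : Fin R) = g i • Cᵀ (i : Fin R) := by
      intro i; simp [hc, i.2]
    rw [show (Finset.univ : Finset {x // x ∈ s}) = s.attach from rfl] at hg
    calc ∑ i ∈ s.attach, c i • Cᵀ (i : Fin R)
        = ∑ i ∈ s.attach, g i • Cᵀ (i : Fin R) := Finset.sum_congr rfl (fun i _ => this i)
      _ = 0 := hg
  -- the support of c within s
  set t : Finset (Fin R) := s.filter (fun r => c r ≠ 0) with ht
  have hkey : t = ∅ := by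
    by_contra hne
    obtain ⟨r0, hr0⟩ := Finset.nonempty_of_ne_empty hne
    have hr0s : r0 ∈ s := (Finset.mem_filter.mp hr0).1
    have hr0c : c r0 ≠ 0 := (Finset.mem_filter.mp hr0).2
    have hRpos : 0 < R := r0.pos
    have hkA : 1 ≤ kRank A := one_le_kRank (by simpa using hRpos) hA
    have hkB : 1 ≤ kRank B := one_le_kRank (by simpa using hRpos) hB
    -- the dependency restricted to t
    have hsumt : ∑ r ∈ t, c r • Cᵀ r = 0 := by
      rw [ht, Finset.sum_filter_of_ne, hsum]
      intro x _ hx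
      intro h0
      exact hx (by rw [h0, zero_smul])
    -- bound on t.card
    have htcard : t.card ≤ K := hs ▸ Finset.card_le_card (Finset.filter_subset _ s)
    have htpos : 1 ≤ t.card := Finset.card_pos.mpr ⟨r0, hr0⟩
    have hKle : K ≤ kRank A + kRank B - 1 := min_le_left _ _
    -- choose W ⊆ t.erase r0 of the right size
    obtain ⟨W, hWsub, hWcard⟩ := Finset.exists_subset_card_eq
      (s := t.erase r0) (n := min (kRank B - 1) (t.card - 1))
      (by rw [Finset.card_erase_of_mem hr0]; exact min_le_right _ _)
    have hr0W : r0 ∉ W := fun h => (Finset.notMem_erase r0 t) (hWsub h)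
    have hWt : W ⊆ t := hWsub.trans (Finset.erase_subset _ _)
    set T : Finset (Fin R) := insert r0 W with hT
    have hTcard : T.card = min (kRank B - 1) (t.card - 1) + 1 := by
      rw [hT, Finset.card_insert_of_notMem hr0W, hWcard]
    have hTle : T.card ≤ kRank B := by omega
    -- the columns of B indexed by T are linearly independent
    have hliB : LinearIndependent ℂ (fun i : {x // x ∈ T} => Bᵀ (i : Fin R)) :=
      li_of_card_le hTle
    -- get y with ⟨b_r, y⟩ = δ_{r,r0} on T
    have hsurj : Function.Surjective (Matrix.of
        (fun (i : {x // x ∈ T}) (j : Fin J) => B j (i : Fin R))).mulVec :=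
      mulVec_surjective_of_li_rows (by exact hliB)
    have hr0T : r0 ∈ T := Finset.mem_insert_self _ _
    obtain ⟨y, hy⟩ := hsurj (Pi.single ⟨r0, hr0T⟩ 1)
    have hyv : ∀ (r : Fin R) (hr : r ∈ T),
        ∑ j, B j r * y j = if r = r0 then 1 else 0 := by
      intro r hr
      have := congrFun hy ⟨r, hr⟩
      simp only [Matrix.mulVec, dotProduct, Matrix.of_apply] at this
      rw [this]
      by_cases h : r = r0
      · subst h; simp
      · rw [Pi.single_apply]
        simp [h]
    -- new coefficients
    set e : Fin R → ℂ := fun r => c r * (∑ j, B j r * y j) with he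
    -- the dependency among columns of A
    have hsumA : ∑ r ∈ t, e r • Aᵀ r = 0 := by
      funext i
      have h1 : ∀ j : Fin J, ∑ r ∈ t, c r * (A i r * B j r) = 0 := by
        intro j
        have := congrFun hsumt (i, j)
        simpa [Matrix.transpose_apply, hC, Finset.sum_apply] using this
      have h2 : ∑ j, (∑ r ∈ t, c r * (A i r * B j r)) * y j = 0 := by
        simp [h1]
      calc (∑ r ∈ t, e r • Aᵀ r) i
          = ∑ r ∈ t, c r * (∑ j, B j r * y j) * A i r := by
            simp [he, Finset.sum_apply, mul_comm]
        _ = ∑ r ∈ t, ∑ j, c r * (A i r * B j r) * y j := by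
            apply Finset.sum_congr rfl
            intro r _
            rw [Finset.mul_sum, Finset.sum_mul]
            apply Finset.sum_congr rfl
            intro j _
            ring
        _ = ∑ j, ∑ r ∈ t, c r * (A i r * B j r) * y j := Finset.sum_comm
        _ = ∑ j, (∑ r ∈ t, c r * (A i r * B j r)) * y j := by
            simp [Finset.sum_mul]
        _ = 0 := h2
    -- e vanishes on W
    have heW : ∀ r ∈ W, e r = 0 := by
      intro r hrW
      have hrT : r ∈ T := Finset.mem_insert_of_mem hrW
      have hrne : r ≠ r0 := fun h => hr0W (h ▸ hrW)
      rw [he]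
      simp [hyv r hrT, hrne]
    -- restrict the dependency to t \ W
    have hsumA' : ∑ r ∈ t \ W, e r • Aᵀ r = 0 := by
      have := Finset.sum_sdiff (f := fun r => e r • Aᵀ r) hWt
      rw [show ∑ r ∈ W, e r • Aᵀ r = 0 from Finset.sum_eq_zero
        (fun r hr => by rw [heW r hr, zero_smul]), add_zero] at this
      rw [this, hsumA]
    -- card bound
    have hcard' : (t \ W).card ≤ kRank A := by
      rw [Finset.card_sdiff_of_subset hWt, hWcard]
      have : t.card ≤ kRank A + kRank B - 1 := htcard.trans hKle
      omega
    -- columns of A on t \ W are linearly independent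
    have hliA : LinearIndependent ℂ (fun i : {x // x ∈ t \ W} => Aᵀ (i : Fin R)) :=
      li_of_card_le hcard'
    have hr0td : r0 ∈ t \ W := Finset.mem_sdiff.mpr ⟨hr0, hr0W⟩
    have : e r0 = 0 := by
      rw [Fintype.linearIndependent_iff] at hliA
      have h0 : ∑ i : {x // x ∈ t \ W}, e (i : Fin R) • Aᵀ (i : Fin R) = 0 := by
        rw [show (Finset.univ : Finset {x // x ∈ t \ W}) = (t \ W).attach from rfl,
          Finset.sum_attach (t \ W) (fun r => e r • Aᵀ r)]
        exact hsumA'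
      exact hliA (fun i => e (i : Fin R)) h0 ⟨r0, hr0td⟩
    simp only [he] at this
    rw [hyv r0 hr0T] at this
    simp at this
    exact hr0c this
  -- conclude: all coefficients vanish
  intro i
  have : c (i : Fin R) = 0 := by
    by_contra hne
    have : (i : Fin R) ∈ t := Finset.mem_filter.mpr ⟨i.2, hne⟩
    rw [hkey] at this
    simp at this
  rw [hc] at this
  simpa [i.2] using this
end
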